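/- arXiv:2112.08408 — 4 statements merged into one kernel-verified Lean document; each statement's English description precedes it below -/
import Mathlib

section
/- For any pair of POVMs (A,B) on ℂ^d with finite outcome sets, the set S = {η ∈ [0,1] : there exists a pair of POVMs (C,D) such that η·(A,B) + (1−η)·(C,D) is compatible} is a closed interval of the form [0, η^g(A,B)]; in particular S is nonempty (it contains 0), downward closed, and contains its supremum. -/
open Matrix Complex Finset
open scoped ComplexOrder

noncomputable section

/-- A POVM: positive semidefinite effects summing to the identity. -/
def IsPOVM {d : ℕ} {X : Type} [Fintype X] (A : X → Matrix (Fin d) (Fin d) ℂ) : Prop :=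
  (∀ x, (A x).PosSemidef) ∧ ∑ x, A x = 1

/-- Compatibility: existence of a joint POVM with the given margins. -/
def Compatible {d : ℕ} {X Y : Type} [Fintype X] [Fintype Y]
    (A : X → Matrix (Fin d) (Fin d) ℂ) (B : Y → Matrix (Fin d) (Fin d) ℂ) : Prop :=
  ∃ J : X × Y → Matrix (Fin d) (Fin d) ℂ, IsPOVM J ∧
    (∀ x, A x = ∑ y, J (x, y)) ∧ (∀ y, B y = ∑ x, J (x, y))

/-- The generalized incompatibility robustness. -/
def etaG {d : ℕ} {X Y : Type} [Fintype X] [Fintype Y]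
    (A : X → Matrix (Fin d) (Fin d) ℂ) (B : Y → Matrix (Fin d) (Fin d) ℂ) : ℝ :=
  sSup {η : ℝ | η ∈ Set.Icc 0 1 ∧ ∃ C D, IsPOVM C ∧ IsPOVM D ∧
    Compatible (fun x => (η : ℂ) • A x + ((1 - η : ℝ) : ℂ) • C x)
      (fun y => (η : ℂ) • B y + ((1 - η : ℝ) : ℂ) • D y)}

/-- The feasible set of visibilities in the definition of the robustness. -/
def feasible {d : ℕ} {X Y : Type} [Fintype X] [Fintype Y]
    (A : X → Matrix (Fin d) (Fin d) ℂ) (B : Y → Matrix (Fin d) (Fin d) ℂ) : Set ℝ :=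
  {η : ℝ | η ∈ Set.Icc 0 1 ∧ ∃ C D, IsPOVM C ∧ IsPOVM D ∧
    Compatible (fun x => (η : ℂ) • A x + ((1 - η : ℝ) : ℂ) • C x)
      (fun y => (η : ℂ) • B y + ((1 - η : ℝ) : ℂ) • D y)}

/-!
A mixture of POVMs is a POVM, and a mixture of two compatible pairs is compatible (mix the joint
POVMs). If `η(A,B) + (1-η)(C,D)` is compatible, mixing it with weight `η'/η` against a pair of
deterministic POVMs, which is always compatible, yields a compatible pair of the form
`η'(A,B) + (1-η')(C',D')`: the feasible set is downward closed, and it contains `0`.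
It is also compact, as the projection of a compact set of triples `(η, C, D)`: POVMs form a
compact set since `0 ≤ A x ≤ 1` bounds every effect in operator norm, and compatible pairs are
the continuous image of the compact set of joint POVMs under the margin map.
-/

variable {d : ℕ} {X Y : Type}

def mix (t : ℝ) (A C : X → Matrix (Fin d) (Fin d) ℂ) : X → Matrix (Fin d) (Fin d) ℂ :=
  fun x => (t : ℂ) • A x + ((1 - t : ℝ) : ℂ) • C x

@[simp]
lemma mix_zero (A C : X → Matrix (Fin d) (Fin d) ℂ) : mix 0 A C = C := by
  ext1 x; simp [mix]

lemma mix_mix {s t u : ℝ} (h : s * (1 - t) = u * (1 - s * t))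
    (A C T : X → Matrix (Fin d) (Fin d) ℂ) :
    mix s (mix t A C) T = mix (s * t) A (mix u C T) := by
  have hℂ : (s : ℂ) * (1 - t) = u * (1 - s * t) := by exact_mod_cast h
  ext1 x
  simp only [mix, smul_add, smul_smul]
  match_scalars
  · ring
  · linear_combination hℂ
  · linear_combination -hℂ

lemma IsPOVM.mix [Fintype X] {A C : X → Matrix (Fin d) (Fin d) ℂ} (hA : IsPOVM A)
    (hC : IsPOVM C) {t : ℝ} (ht : t ∈ Set.Icc (0 : ℝ) 1) : IsPOVM (mix t A C) := by
  refine ⟨fun x => ((hA.1 x).smul ?_).add ((hC.1 x).smul ?_), ?_⟩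
  · exact_mod_cast ht.1
  · exact_mod_cast sub_nonneg.2 ht.2
  · simp only [_root_.mix, Finset.sum_add_distrib, ← Finset.smul_sum, hA.2, hC.2]
    rw [← add_smul]; push_cast; simp

lemma isPOVM_single [Fintype X] [DecidableEq X] (x₀ : X) :
    IsPOVM (Pi.single x₀ (1 : Matrix (Fin d) (Fin d) ℂ)) := by
  refine ⟨fun x => ?_, by simp⟩
  rcases eq_or_ne x x₀ with rfl | hx
  · simpa using PosSemidef.one
  · simpa [hx] using PosSemidef.zero

lemma compatible_single [Fintype X] [Fintype Y] [DecidableEq Y]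
    {A : X → Matrix (Fin d) (Fin d) ℂ} (hA : IsPOVM A) (y₀ : Y) :
    Compatible A (Pi.single y₀ 1) := by
  refine ⟨fun p => Pi.single (M := fun _ => Matrix (Fin d) (Fin d) ℂ) y₀ (A p.1) p.2,
    ⟨fun p => ?_, ?_⟩, fun x => ?_, fun y => ?_⟩
  · rcases eq_or_ne p.2 y₀ with h | h
    · simpa [h] using hA.1 p.1
    · simpa [h] using PosSemidef.zero
  · simp [Fintype.sum_prod_type, hA.2]
  · simp
  · rcases eq_or_ne y y₀ with rfl | h
    · simp [hA.2]
    · simp [h]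

lemma Compatible.mix [Fintype X] [Fintype Y] {A C : X → Matrix (Fin d) (Fin d) ℂ}
    {B D : Y → Matrix (Fin d) (Fin d) ℂ}
    (hAB : Compatible A B) (hCD : Compatible C D) {t : ℝ} (ht : t ∈ Set.Icc (0 : ℝ) 1) :
    Compatible (mix t A C) (mix t B D) := by
  obtain ⟨J, hJ, hJA, hJB⟩ := hAB
  obtain ⟨K, hK, hKC, hKD⟩ := hCD
  refine ⟨_root_.mix t J K, hJ.mix hK ht, fun x => ?_, fun y => ?_⟩
  · simp [_root_.mix, Finset.sum_add_distrib, ← Finset.smul_sum, hJA, hKC]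
  · simp [_root_.mix, Finset.sum_add_distrib, ← Finset.smul_sum, hJB, hKD]

lemma mem_feasible_iff [Fintype X] [Fintype Y] {A : X → Matrix (Fin d) (Fin d) ℂ}
    {B : Y → Matrix (Fin d) (Fin d) ℂ} {η : ℝ} :
    η ∈ feasible A B ↔ η ∈ Set.Icc 0 1 ∧
      ∃ C D, IsPOVM C ∧ IsPOVM D ∧ Compatible (mix η A C) (mix η B D) :=
  Iff.rfl

lemma zero_mem_feasible [Fintype X] [Fintype Y] [Nonempty X] [Nonempty Y]
    (A : X → Matrix (Fin d) (Fin d) ℂ) (B : Y → Matrix (Fin d) (Fin d) ℂ) :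
    (0 : ℝ) ∈ feasible A B := by
  classical
  obtain ⟨x₀⟩ := ‹Nonempty X›
  obtain ⟨y₀⟩ := ‹Nonempty Y›
  refine mem_feasible_iff.2
    ⟨⟨le_rfl, zero_le_one⟩, _, _, isPOVM_single x₀, isPOVM_single y₀, ?_⟩
  simpa only [mix_zero] using compatible_single (isPOVM_single x₀) y₀

lemma mem_feasible_of_le [Fintype X] [Fintype Y] [Nonempty X] [Nonempty Y]
    {A : X → Matrix (Fin d) (Fin d) ℂ} {B : Y → Matrix (Fin d) (Fin d) ℂ} {η η' : ℝ}
    (hη : η ∈ feasible A B) (h0 : 0 ≤ η') (hle : η' ≤ η) : η' ∈ feasible A B := by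
  classical
  rcases hle.eq_or_lt with rfl | hlt
  · exact hη
  obtain ⟨⟨-, hη1⟩, C, D, hC, hD, hCD⟩ := mem_feasible_iff.1 hη
  obtain ⟨x₀⟩ := ‹Nonempty X›
  obtain ⟨y₀⟩ := ‹Nonempty Y›
  have hηpos : 0 < η := h0.trans_lt hlt
  set s := η' / η
  have hsη : s * η = η' := div_mul_cancel₀ _ hηpos.ne'
  have hs_mem : s ∈ Set.Icc (0 : ℝ) 1 :=
    ⟨div_nonneg h0 hηpos.le, div_le_one_of_le₀ hle hηpos.le⟩
  have hη'1 : 0 < 1 - η' := by linarith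
  set u := s * (1 - η) / (1 - η')
  have hu : s * (1 - η) = u * (1 - s * η) := by
    rw [hsη]; exact (div_mul_cancel₀ _ hη'1.ne').symm
  have hu_mem : u ∈ Set.Icc (0 : ℝ) 1 := by
    refine ⟨div_nonneg (mul_nonneg hs_mem.1 (by linarith)) hη'1.le, (div_le_one hη'1).2 ?_⟩
    nlinarith [hs_mem.2]
  have key := hCD.mix (compatible_single (isPOVM_single x₀) y₀) hs_mem
  rw [mix_mix hu, mix_mix hu, hsη] at key
  exact mem_feasible_iff.2 ⟨⟨h0, by linarith⟩, _, _, hC.mix (isPOVM_single x₀) hu_mem,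
    hD.mix (isPOVM_single y₀) hu_mem, key⟩

section Compactness

open scoped MatrixOrder Matrix.Norms.L2Operator

lemma isClosed_setOf_posSemidef :
    IsClosed {M : Matrix (Fin d) (Fin d) ℂ | M.PosSemidef} := by
  simpa only [nonneg_iff_posSemidef] using
    CStarAlgebra.isClosed_nonneg (A := Matrix (Fin d) (Fin d) ℂ)

lemma IsPOVM.norm_le_one [Fintype X] {A : X → Matrix (Fin d) (Fin d) ℂ} (hA : IsPOVM A)
    (x : X) : ‖A x‖ ≤ 1 := by
  have h0 : 0 ≤ A x := (hA.1 x).nonneg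
  have h1 : A x ≤ 1 :=
    hA.2 ▸ Finset.single_le_sum (fun y _ => (hA.1 y).nonneg) (Finset.mem_univ x)
  refine (CStarAlgebra.norm_le_norm_of_nonneg_of_le h0 h1).trans ?_
  rw [Matrix.cstar_norm_def, map_one]
  exact ContinuousLinearMap.norm_id_le

lemma isCompact_setOf_isPOVM [Fintype X] :
    IsCompact {A : X → Matrix (Fin d) (Fin d) ℂ | IsPOVM A} := by
  refine Metric.isCompact_of_isClosed_isBounded ?_ ?_
  · simp only [IsPOVM, Set.ofPred_and, Set.ofPred_forall]
    exact (isClosed_iInter fun x => isClosed_setOf_posSemidef.preimage (continuous_apply x)).inter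
      (isClosed_eq (continuous_finsetSum _ fun x _ => continuous_apply x) continuous_const)
  · refine (Metric.isBounded_iff_subset_closedBall 0).2 ⟨1, fun A hA => ?_⟩
    rw [mem_closedBall_zero_iff, pi_norm_le_iff_of_nonneg zero_le_one]
    exact hA.norm_le_one

lemma isCompact_setOf_compatible [Fintype X] [Fintype Y] :
    IsCompact {p : (X → Matrix (Fin d) (Fin d) ℂ) × (Y → Matrix (Fin d) (Fin d) ℂ) |
      Compatible p.1 p.2} := by
  have hmargins : Continuous fun J : X × Y → Matrix (Fin d) (Fin d) ℂ =>
      ((fun x => ∑ y, J (x, y)), fun y => ∑ x, J (x, y)) := by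
    fun_prop
  convert isCompact_setOf_isPOVM.image hmargins using 1
  ext ⟨A, B⟩
  simp [Compatible, funext_iff, eq_comm]

lemma isCompact_feasible [Fintype X] [Fintype Y] (A : X → Matrix (Fin d) (Fin d) ℂ)
    (B : Y → Matrix (Fin d) (Fin d) ℂ) : IsCompact (feasible A B) := by
  have hK : IsCompact (Set.Icc (0 : ℝ) 1 ×ˢ {C : X → Matrix (Fin d) (Fin d) ℂ | IsPOVM C} ×ˢ
      {D : Y → Matrix (Fin d) (Fin d) ℂ | IsPOVM D} ∩
      (fun q => (mix q.1 A q.2.1, mix q.1 B q.2.2)) ⁻¹' {p | Compatible p.1 p.2}) :=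
    (isCompact_Icc.prod (isCompact_setOf_isPOVM.prod isCompact_setOf_isPOVM)).inter_right
      (isCompact_setOf_compatible.isClosed.preimage (by unfold mix; fun_prop))
  convert hK.image continuous_fst using 1
  ext η
  constructor
  · rintro ⟨hη, C, D, hC, hD, hCD⟩
    exact ⟨(η, C, D), ⟨⟨hη, hC, hD⟩, hCD⟩, rfl⟩
  · rintro ⟨⟨η, C, D⟩, ⟨⟨hη, hC, hD⟩, hCD⟩, rfl⟩
    exact ⟨hη, C, D, hC, hD, hCD⟩

end Compactness

theorem stmt_9_general {d : ℕ} {X Y : Type} [Fintype X] [Fintype Y] [Nonempty X] [Nonempty Y]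
    (A : X → Matrix (Fin d) (Fin d) ℂ) (B : Y → Matrix (Fin d) (Fin d) ℂ) :
    (0 : ℝ) ∈ feasible A B ∧ feasible A B = Set.Icc 0 (sSup (feasible A B)) := by
  have h0 := zero_mem_feasible A B
  have hK := isCompact_feasible A B
  have hsup : sSup (feasible A B) ∈ feasible A B := hK.sSup_mem ⟨0, h0⟩
  refine ⟨h0, Set.Subset.antisymm (fun η hη => ⟨hη.1.1, le_csSup hK.bddAbove hη⟩) ?_⟩
  exact fun η hη => mem_feasible_of_le hsup hη.1 hη.2

/-- the feasible set of visibilities contains `0` and is exactly the closed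
interval `[0, η^g(A,B)]` where `η^g(A,B)` is its supremum. -/
theorem stmt_9 {d : ℕ} {X Y : Type} [Fintype X] [Fintype Y] [Nonempty X] [Nonempty Y]
    (A : X → Matrix (Fin d) (Fin d) ℂ) (B : Y → Matrix (Fin d) (Fin d) ℂ)
    (hA : IsPOVM A) (hB : IsPOVM B) :
    (0 : ℝ) ∈ feasible A B ∧ feasible A B = Set.Icc 0 (sSup (feasible A B)) :=
  stmt_9_general A B
end
end

section
/- Let G = {I, R₁, R₂, R₃} ⊂ SO(3) be the dihedral group of 180° rotations about the coordinate axes e₁, e₂, e₃, represented projectively on ℂ² by U(I)=I, U(R_i)=σ_i. Suppose N is a measurement assemblage on the bundle with total space Z = {+a,−a,+b,−b}, base T = {a,b}, where a = cosθ e₁ + sinθ e₂, b = cosθ e₁ − sinθ e₂, and suppose N is G-covariant (for the natural G-action on Z induced by the rotations). Then there exist ν ∈ [0,1] and φ ∈ ℝ such that N(±a) = (I ± c·σ)/2 and N(±b) = (I ± d·σ)/2, with c = ν(cosφ e₁ + sinφ e₂) and d = ν(cosφ e₁ − sinφ e₂). -/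
/-!
Covariance under `R₃` gives `N(−a) = σ₃ N(+a) σ₃`, so completeness on the fiber over `a` reads
`N(+a) + σ₃ N(+a) σ₃ = I`. Conjugation by `σ₃` fixes the diagonal and negates the off-diagonal
entries, hence `N(+a)` has diagonal `½` and, being Hermitian, equals `(I + c·σ)/2` with `c ⊥ e₃`.
Positivity bounds `‖c‖ ≤ 1` through `det ((I + c·σ)/2) = (1 − ‖c‖²)/4`, polar coordinates of
`(c₁, c₂)` give `ν` and `φ`, and conjugation by `σ₁` reflects `c` to `d = R₁ c` on the fiber over `b`.
-/

open Matrix Complex Finset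
open scoped ComplexOrder

noncomputable section

def σ1 : Matrix (Fin 2) (Fin 2) ℂ := !![0, 1; 1, 0]
def σ2 : Matrix (Fin 2) (Fin 2) ℂ := !![0, -Complex.I; Complex.I, 0]
def σ3 : Matrix (Fin 2) (Fin 2) ℂ := !![1, 0; 0, -1]

/-- `v·σ = v₁σ₁ + v₂σ₂ + v₃σ₃` -/
def dotσ (v : Fin 3 → ℝ) : Matrix (Fin 2) (Fin 2) ℂ :=
  (v 0 : ℂ) • σ1 + (v 1 : ℂ) • σ2 + (v 2 : ℂ) • σ3

theorem dotσ_eq_fin_two (x y z : ℝ) :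
    dotσ ![x, y, z] = !![(z : ℂ), x - y * I; x + y * I, -z] := by
  ext i j
  fin_cases i <;> fin_cases j <;> simp [dotσ, σ1, σ2, σ3]
  ring

theorem dotσ_neg (v : Fin 3 → ℝ) : dotσ (-v) = -dotσ v := by
  simp only [dotσ, Pi.neg_apply, Complex.ofReal_neg, neg_smul]
  abel

theorem σ1_mul_σ1 : σ1 * σ1 = 1 := by
  simp [σ1, Matrix.one_fin_two]

theorem σ3_mul_σ3 : σ3 * σ3 = 1 := by
  simp [σ3, Matrix.one_fin_two]

theorem σ1_mul_dotσ_mul_σ1 (x y z : ℝ) : σ1 * dotσ ![x, y, z] * σ1 = dotσ ![x, -y, -z] := by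
  simp only [dotσ_eq_fin_two, σ1, Matrix.mul_fin_two]
  ext i j
  fin_cases i <;> fin_cases j <;> simp
  ring

theorem σ3_mul_dotσ_mul_σ3 (x y z : ℝ) : σ3 * dotσ ![x, y, z] * σ3 = dotσ ![-x, -y, z] := by
  simp only [dotσ_eq_fin_two, σ3, Matrix.mul_fin_two]
  ext i j
  fin_cases i <;> fin_cases j <;> simp <;> ring

theorem conj_half_one_add_smul {σ : Matrix (Fin 2) (Fin 2) ℂ} (hσ : σ * σ = 1)
    (s : ℂ) (A : Matrix (Fin 2) (Fin 2) ℂ) :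
    σ * (((1 : ℂ) / 2) • (1 + s • A)) * σ = ((1 : ℂ) / 2) • (1 + s • (σ * A * σ)) := by
  simp only [Matrix.mul_smul, Matrix.smul_mul, mul_add, add_mul, Matrix.mul_one, hσ,
    Matrix.mul_assoc]

theorem Matrix.PosSemidef.sq_add_sq_add_sq_le_one {x y z : ℝ}
    (h : (((1 : ℂ) / 2) • (1 + dotσ ![x, y, z])).PosSemidef) : x ^ 2 + y ^ 2 + z ^ 2 ≤ 1 := by
  have hdet := h.det_nonneg
  rw [dotσ_eq_fin_two, Matrix.det_fin_two] at hdet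
  simp only [Matrix.one_fin_two, Matrix.smul_of, Matrix.of_add_of] at hdet
  simp [Complex.le_def] at hdet
  nlinarith

theorem exists_eq_half_one_add_dotσ {M : Matrix (Fin 2) (Fin 2) ℂ} (hM : M.IsHermitian)
    (h : M + σ3 * M * σ3 = 1) : ∃ x y : ℝ, M = ((1 : ℂ) / 2) • (1 + dotσ ![x, y, 0]) := by
  rw [Matrix.eta_fin_two M] at h ⊢
  simp only [σ3, Matrix.mul_fin_two, Matrix.one_fin_two, Matrix.of_add_of] at h
  have h00 : M 0 0 + M 0 0 = 1 := by simpa using congrFun₂ h 0 0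
  have h11 : M 1 1 + M 1 1 = 1 := by simpa using congrFun₂ h 1 1
  have h01 : M 0 1 = star (M 1 0) := by rw [← hM.apply 1 0, star_star]
  refine ⟨2 * (M 1 0).re, 2 * (M 1 0).im, ?_⟩
  rw [dotσ_eq_fin_two]
  ext i j
  fin_cases i <;> fin_cases j <;> simp
  · linear_combination h00 / 2
  · apply Complex.ext <;> simp [h01]
  · apply Complex.ext <;> simp
  · linear_combination h11 / 2

theorem exists_polar (x y : ℝ) :
    ∃ ν φ : ℝ, 0 ≤ ν ∧ ν ^ 2 = x ^ 2 + y ^ 2 ∧ x = ν * Real.cos φ ∧ y = ν * Real.sin φ :=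
  ⟨‖(⟨x, y⟩ : ℂ)‖, arg ⟨x, y⟩, norm_nonneg _, by rw [Complex.sq_norm, Complex.normSq_mk]; ring,
    (Complex.norm_mul_cos_arg (⟨x, y⟩ : ℂ)).symm, (Complex.norm_mul_sin_arg (⟨x, y⟩ : ℂ)).symm⟩

/-- `z : Bool` is the sign (`true ↦ +`) and `k : Bool` the base point (`false ↦ a`, `true ↦ b`);
`hcov1` and `hcov3` encode `R₁(±a) = ±b` and `R₃(±a) = ∓a`. -/
theorem stmt_13_general
    (N : Bool → Bool → Matrix (Fin 2) (Fin 2) ℂ)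
    (hpos : ∀ z k, (N z k).PosSemidef)
    (hsum : ∀ k, N true k + N false k = 1)
    (hcov1 : ∀ z k, N z (!k) = σ1 * N z k * σ1)
    (hcov3 : ∀ z k, N (!z) k = σ3 * N z k * σ3) :
    ∃ ν φ : ℝ, 0 ≤ ν ∧ ν ≤ 1 ∧
      (∀ z : Bool,
        N z false = ((1 : ℂ) / 2) •
          ((1 : Matrix (Fin 2) (Fin 2) ℂ) +
            (if z then (1 : ℂ) else -1) • dotσ ![ν * Real.cos φ, ν * Real.sin φ, 0]) ∧
        N z true = ((1 : ℂ) / 2) •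
          ((1 : Matrix (Fin 2) (Fin 2) ℂ) +
            (if z then (1 : ℂ) else -1) • dotσ ![ν * Real.cos φ, -(ν * Real.sin φ), 0])) := by
  have hneg_a : N false false = σ3 * N true false * σ3 := hcov3 true false
  have hb : ∀ z, N z true = σ1 * N z false * σ1 := fun z => hcov1 z false
  obtain ⟨x, y, hplus_a⟩ :=
    exists_eq_half_one_add_dotσ (hpos true false).isHermitian (hneg_a ▸ hsum false)
  have hxy : x ^ 2 + y ^ 2 + 0 ^ 2 ≤ 1 :=
    (hplus_a ▸ hpos true false).sq_add_sq_add_sq_le_one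
  obtain ⟨ν, φ, hν, hν_sq, rfl, rfl⟩ := exists_polar x y
  have ha : ∀ z : Bool, N z false = ((1 : ℂ) / 2) •
      (1 + (if z then (1 : ℂ) else -1) • dotσ ![ν * Real.cos φ, ν * Real.sin φ, 0]) := by
    rintro (_ | _)
    · rw [hneg_a, hplus_a, ← one_smul ℂ (dotσ _), conj_half_one_add_smul σ3_mul_σ3,
        σ3_mul_dotσ_mul_σ3, show ![-(ν * Real.cos φ), -(ν * Real.sin φ), 0] =
          -![ν * Real.cos φ, ν * Real.sin φ, 0] by simp, dotσ_neg]
      simp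
    · simpa using hplus_a
  refine ⟨ν, φ, hν, by nlinarith, fun z => ⟨ha z, ?_⟩⟩
  rw [hb, ha, conj_half_one_add_smul σ1_mul_σ1, σ1_mul_dotσ_mul_σ1, neg_zero]

/-- a dihedral-covariant measurement assemblage on the bundle with total space
`Z = {+a, −a, +b, −b}` (sign `z : Bool`, `true ↦ +`; base point `k : Bool`, `false ↦ a`,
`true ↦ b`) is necessarily of the form `N(±a) = (I ± c·σ)/2`, `N(±b) = (I ± d·σ)/2` with
`c = ν(cosφ e₁ + sinφ e₂)`, `d = ν(cosφ e₁ − sinφ e₂)` for some `ν ∈ [0,1]` and `φ ∈ ℝ`.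
The covariance hypotheses encode the action of the `180°` rotations `R₁, R₂, R₃` about the
coordinate axes (`R₁(±a) = ±b`, `R₂(±a) = ∓b`, `R₃(±a) = ∓a`) implemented by the Pauli
matrices. -/
theorem stmt_13 (θ : ℝ) (hθ0 : 0 < θ) (hθ1 : θ ≤ Real.pi / 2)
    (N : Bool → Bool → Matrix (Fin 2) (Fin 2) ℂ)
    (hpos : ∀ z k, (N z k).PosSemidef)
    (hsum : ∀ k, N true k + N false k = 1)
    (hcov1 : ∀ z k, N z (!k) = σ1 * N z k * σ1)
    (hcov2 : ∀ z k, N (!z) (!k) = σ2 * N z k * σ2)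
    (hcov3 : ∀ z k, N (!z) k = σ3 * N z k * σ3) :
    ∃ ν φ : ℝ, 0 ≤ ν ∧ ν ≤ 1 ∧
      (∀ z : Bool,
        N z false = ((1 : ℂ) / 2) •
          ((1 : Matrix (Fin 2) (Fin 2) ℂ) +
            (if z then (1 : ℂ) else -1) • dotσ ![ν * Real.cos φ, ν * Real.sin φ, 0]) ∧
        N z true = ((1 : ℂ) / 2) •
          ((1 : Matrix (Fin 2) (Fin 2) ℂ) +
            (if z then (1 : ℂ) else -1) • dotσ ![ν * Real.cos φ, -(ν * Real.sin φ), 0])) :=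
  stmt_13_general N hpos hsum hcov1 hcov3
end
end

section
/- Let D = {u ∈ ℝ² : ‖u‖₂ ≤ 1} be the unit Euclidean disk and Q = {u ∈ ℝ² : |u₁|+|u₂| ≤ 1} the unit ℓ¹-ball. Fix a = γ(cosθ, sinθ) with 0 < θ < π/2, 0 < γ ≤ 1 and γ(cosθ+sinθ) > 1. Then max{η ∈ [0,1] : η a + (1−η) c ∈ Q for some c ∈ D} = (√2+1)/(√2 + γ(cosθ+sinθ)). -/
noncomputable section

/-- with `D` the Euclidean unit disk and `Q` the unit `ℓ¹`-ball in the plane,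
and `a = γ(cosθ, sinθ)` with `γ(cosθ+sinθ) > 1`, the greatest `η ∈ [0,1]` such that
`η a + (1−η) c ∈ Q` for some `c ∈ D` is `(√2+1)/(√2 + γ(cosθ+sinθ))`. -/
theorem stmt_15 (θ γ : ℝ) (hθ0 : 0 < θ) (hθ1 : θ < Real.pi / 2)
    (hγ0 : 0 < γ) (hγ1 : γ ≤ 1) (h : 1 < γ * (Real.cos θ + Real.sin θ)) :
    IsGreatest
      {η : ℝ | η ∈ Set.Icc 0 1 ∧ ∃ c : ℝ × ℝ, c.1 ^ 2 + c.2 ^ 2 ≤ 1 ∧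
        |η * (γ * Real.cos θ) + (1 - η) * c.1| +
          |η * (γ * Real.sin θ) + (1 - η) * c.2| ≤ 1}
      ((Real.sqrt 2 + 1) / (Real.sqrt 2 + γ * (Real.cos θ + Real.sin θ))) := by
  have hr2 : Real.sqrt 2 ^ 2 = 2 := Real.sq_sqrt (by norm_num)
  set r := Real.sqrt 2 with hrdef
  have hr1 : 1 ≤ r := by nlinarith [Real.sqrt_nonneg 2]
  have hc0 : 0 < Real.cos θ :=
    Real.cos_pos_of_mem_Ioo ⟨by linarith [Real.pi_pos], hθ1⟩
  have hs0 : 0 < Real.sin θ :=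
    Real.sin_pos_of_pos_of_lt_pi hθ0 (by linarith [Real.pi_pos])
  have hc1 : Real.cos θ ≤ 1 := Real.cos_le_one θ
  have hs1 : Real.sin θ ≤ 1 := Real.sin_le_one θ
  have hgc : γ * Real.cos θ ≤ 1 := by nlinarith
  have hgs : γ * Real.sin θ ≤ 1 := by nlinarith
  set s := γ * (Real.cos θ + Real.sin θ) with hsdef
  have hd : 0 < r + s := by nlinarith
  constructor
  · refine ⟨⟨by positivity, ?_⟩, ⟨-(r / 2), -(r / 2)⟩, by nlinarith, ?_⟩
    · rw [div_le_one hd]; linarith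
    · have hx : 0 ≤ (r + 1) / (r + s) * (γ * Real.cos θ) +
          (1 - (r + 1) / (r + s)) * (-(r / 2)) := by
        have heq : (r + 1) / (r + s) * (γ * Real.cos θ) +
            (1 - (r + 1) / (r + s)) * (-(r / 2)) =
            ((r + 1) * (γ * Real.cos θ) * 2 - (s - 1) * r) / (2 * (r + s)) := by
          field_simp
          ring
        rw [heq]
        apply div_nonneg _ (by linarith)
        have : s = γ * Real.cos θ + γ * Real.sin θ := by rw [hsdef]; ring
        nlinarith [mul_pos hγ0 hc0]
      have hy : 0 ≤ (r + 1) / (r + s) * (γ * Real.sin θ) +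
          (1 - (r + 1) / (r + s)) * (-(r / 2)) := by
        have heq : (r + 1) / (r + s) * (γ * Real.sin θ) +
            (1 - (r + 1) / (r + s)) * (-(r / 2)) =
            ((r + 1) * (γ * Real.sin θ) * 2 - (s - 1) * r) / (2 * (r + s)) := by
          field_simp
          ring
        rw [heq]
        apply div_nonneg _ (by linarith)
        have : s = γ * Real.cos θ + γ * Real.sin θ := by rw [hsdef]; ring
        nlinarith [mul_pos hγ0 hs0]
      have hsum : (r + 1) / (r + s) * (γ * Real.cos θ) +
          (1 - (r + 1) / (r + s)) * (-(r / 2)) +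
          ((r + 1) / (r + s) * (γ * Real.sin θ) +
          (1 - (r + 1) / (r + s)) * (-(r / 2))) = 1 := by
        have gen : ∀ a b : ℝ, 0 < a + b →
            (a + 1) / (a + b) * b + (1 - (a + 1) / (a + b)) * (-a) = 1 := by
          intro a b hab
          field_simp
          ring
        have key := gen r s hd
        have expand : (r + 1) / (r + s) * (γ * Real.cos θ) +
            (1 - (r + 1) / (r + s)) * (-(r / 2)) +
            ((r + 1) / (r + s) * (γ * Real.sin θ) +
            (1 - (r + 1) / (r + s)) * (-(r / 2))) =
            (r + 1) / (r + s) * s + (1 - (r + 1) / (r + s)) * (-r) := by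
          simp only [hsdef]
          ring
        rw [expand, key]
      rw [abs_of_nonneg hx, abs_of_nonneg hy]
      linarith
  · rintro η ⟨⟨hη0, hη1⟩, c, hc, habs⟩
    have h1 : η * (γ * Real.cos θ) + (1 - η) * c.1 +
        (η * (γ * Real.sin θ) + (1 - η) * c.2) ≤ 1 :=
      le_trans (add_le_add (le_abs_self _) (le_abs_self _)) habs
    have hcc : -r ≤ c.1 + c.2 := by
      nlinarith [sq_nonneg (c.1 - c.2), sq_nonneg (c.1 + c.2 + r)]
    have hss : s = γ * Real.cos θ + γ * Real.sin θ := by rw [hsdef]; ring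
    rw [le_div_iff₀ hd]
    nlinarith [mul_nonneg (sub_nonneg.2 hη1) (by linarith : (0:ℝ) ≤ c.1 + c.2 + r)]
end
end

section
/- Let a = cosθ e₁ + sinθ e₂, b = cosθ e₁ − sinθ e₂ with 0 < θ < π/2 and let γ satisfy 1/(cosθ+sinθ) < γ ≤ 1. Then the generalized incompatibility robustness of the noisy unbiased qubit measurements A_{γa}(±) = (I ± γ a·σ)/2 and B_{γb}(±) = (I ± γ b·σ)/2 equals η^g(A_{γa}, B_{γb}) = (√2+1)/(√2 + γ(cosθ+sinθ)). -/
open Matrix Complex Finset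
open scoped ComplexOrder

noncomputable section

/-- The qubit operator `(I + z v·σ)/2`. -/
def st (v : Fin 3 → ℝ) (z : ℝ) : Matrix (Fin 2) (Fin 2) ℂ :=
  ((1 : ℂ) / 2) • ((1 : Matrix (Fin 2) (Fin 2) ℂ) + (z : ℂ) • dotσ v)

/-- `u_a = (e₁+e₂)/√2`. -/
def ua : Fin 3 → ℝ := ![1 / Real.sqrt 2, 1 / Real.sqrt 2, 0]

/-- `u_b = (e₁−e₂)/√2`. -/
def ub : Fin 3 → ℝ := ![1 / Real.sqrt 2, -(1 / Real.sqrt 2), 0]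

/-- The sign associated with a Boolean outcome (`true ↦ +1`, `false ↦ −1`). -/
def sgn (z : Bool) : ℝ := if z then 1 else -1

/-- Success probability of the discrimination task for the ensemble with Bloch vectors
`±u_a, ±u_b` and dichotomic measurements `C, D`. -/
def Psucc (C D : Bool → Matrix (Fin 2) (Fin 2) ℂ) : ℝ :=
  (1 / 4) * ∑ z : Bool, ((st ua (sgn z) * C z).trace.re + (st ub (sgn z) * D z).trace.re)

/-!
Upper bound: `Psucc C D`, the probability of guessing `±u_a` with `C` and `±u_b` with `D`, is
affine in `(C, D)`, nonnegative on POVMs, and at most `(2 + √2) / 4` on a compatible pair: since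
`u_a ⊥ u_b`, every `st u_a s + st u_b t` is bounded by `(1 + 1/√2) • 1`, and one pairs this bound
with the effects of the joint POVM. On the pair with Bloch vectors `(a₀, ±a₁, 0)` it equals
`(2 + √2 (a₀ + a₁)) / 4`, which forces `η ≤ (√2 + 1) / (√2 + a₀ + a₁)`.

Lower bound: at this `η`, mixing with the noise `st (-u_a)`, `st (-u_b)` gives Bloch vectors
`(p, ±q, 0)` with `p, q ≥ 0` and `p + q = 1`, and such a pair has the joint POVM
`J (x, y) = p • st e₁ (sgn x)` for `x = y` and `q • st e₂ (sgn x)` otherwise.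
-/

lemma dotσ_eq (v : Fin 3 → ℝ) :
    dotσ v = !![(v 2 : ℂ), v 0 - v 1 * I; v 0 + v 1 * I, -(v 2 : ℂ)] := by
  ext i j
  fin_cases i <;> fin_cases j <;> simp [dotσ, σ1, σ2, σ3, sub_eq_add_neg, mul_comm]

lemma st_eq (v : Fin 3 → ℝ) (z : ℝ) :
    st v z = !![(1 + z * v 2 : ℂ) / 2, (z * v 0 - z * v 1 * I) / 2;
                (z * v 0 + z * v 1 * I) / 2, (1 - z * v 2 : ℂ) / 2] := by
  ext i j
  fin_cases i <;> fin_cases j <;> simp [st, dotσ_eq, one_apply] <;> ring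

lemma st_add_st_neg (v : Fin 3 → ℝ) (z : ℝ) : st v z + st v (-z) = 1 := by
  ext i j
  fin_cases i <;> fin_cases j <;> simp [st_eq, one_apply] <;> ring

lemma st_neg (v : Fin 3 → ℝ) (z : ℝ) : st (-v) z = st v (-z) := by
  ext i j
  fin_cases i <;> fin_cases j <;> simp [st_eq]

lemma smul_st_add_smul_st (η : ℝ) (v w : Fin 3 → ℝ) (z : ℝ) :
    (η : ℂ) • st v z + ((1 - η : ℝ) : ℂ) • st w z = st (η • v + (1 - η) • w) z := by
  ext i j
  fin_cases i <;> fin_cases j <;> simp [st_eq] <;> ring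

lemma st_add_st (u v : Fin 3 → ℝ) (s t : ℝ) :
    st u s + st v t = 1 + dotσ ((s / 2) • u + (t / 2) • v) := by
  ext i j
  fin_cases i <;> fin_cases j <;> simp [st_eq, dotσ_eq, one_apply] <;> ring

lemma trace_st_mul_st (u v : Fin 3 → ℝ) (s t : ℝ) :
    (st u s * st v t).trace = ((1 + s * t * (u 0 * v 0 + u 1 * v 1 + u 2 * v 2)) / 2 : ℝ) := by
  apply Complex.ext <;> simp [st_eq, trace_fin_two] <;> ring

lemma posSemidef_smul_one_add_dotσ {c : ℝ} {v : Fin 3 → ℝ} (hc : 0 ≤ c)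
    (hv : v 0 ^ 2 + v 1 ^ 2 + v 2 ^ 2 ≤ c ^ 2) : ((c : ℂ) • 1 + dotσ v).PosSemidef := by
  refine PosSemidef.of_dotProduct_mulVec_nonneg ?_ fun x => ?_
  · ext i j
    fin_cases i <;> fin_cases j <;> simp [dotσ_eq, Complex.ext_iff]
  set P := (x 0).re ^ 2 + (x 0).im ^ 2
  set Q := (x 1).re ^ 2 + (x 1).im ^ 2
  set r := (x 0).re * (x 1).re + (x 0).im * (x 1).im
  set s := (x 0).re * (x 1).im - (x 0).im * (x 1).re
  -- `(2r, 2s, P - Q)` is the Bloch vector of `x`: its length is `P + Q`, the squared norm of `x`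
  have hform : star x ⬝ᵥ (((c : ℂ) • 1 + dotσ v) *ᵥ x)
      = ((c * (P + Q) + (v 0 * (2 * r) + v 1 * (2 * s) + v 2 * (P - Q)) : ℝ) : ℂ) := by
    apply Complex.ext <;>
      simp [P, Q, r, s, sq, dotσ_eq, dotProduct, mulVec, Fin.sum_univ_two, one_apply] <;> ring
  have hPQ : 0 ≤ P + Q := by positivity
  have hcs : (v 0 * (2 * r) + v 1 * (2 * s) + v 2 * (P - Q)) ^ 2 ≤ (c * (P + Q)) ^ 2 := by
    nlinarith [sq_nonneg (v 0 * (2 * s) - v 1 * (2 * r)), sq_nonneg (v 0 * (P - Q) - v 2 * (2 * r)),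
      sq_nonneg (v 1 * (P - Q) - v 2 * (2 * s)), mul_le_mul_of_nonneg_right hv (sq_nonneg (P + Q))]
  rw [hform, Complex.zero_le_real]
  linarith [(abs_le_of_sq_le_sq' hcs (mul_nonneg hc hPQ)).1]

lemma posSemidef_st {v : Fin 3 → ℝ} {z : ℝ} (h : z ^ 2 * (v 0 ^ 2 + v 1 ^ 2 + v 2 ^ 2) ≤ 1) :
    (st v z).PosSemidef := by
  have hst : st v z = ((1 / 2 : ℝ) : ℂ) • 1 + dotσ ((z / 2) • v) := by
    ext i j
    fin_cases i <;> fin_cases j <;> simp [st_eq, dotσ_eq, one_apply] <;> ring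
  rw [hst]
  refine posSemidef_smul_one_add_dotσ (by norm_num) ?_
  simp only [Pi.smul_apply, smul_eq_mul]
  nlinarith

lemma isPOVM_st {v : Fin 3 → ℝ} (hv : v 0 ^ 2 + v 1 ^ 2 + v 2 ^ 2 ≤ 1) :
    IsPOVM fun z => st v (sgn z) := by
  refine ⟨fun z => posSemidef_st ?_, ?_⟩
  · cases z <;> simpa [sgn] using hv
  · simpa [sgn] using st_add_st_neg v 1

lemma posSemidef_smul_one_sub_st_add_st {c s t : ℝ} {u v : Fin 3 → ℝ} (hc : 1 ≤ c)
    (h : ((s * u 0 + t * v 0) / 2) ^ 2 + ((s * u 1 + t * v 1) / 2) ^ 2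
      + ((s * u 2 + t * v 2) / 2) ^ 2 ≤ (c - 1) ^ 2) :
    ((c : ℂ) • 1 - (st u s + st v t)).PosSemidef := by
  have heq : (c : ℂ) • 1 - (st u s + st v t)
      = ((c - 1 : ℝ) : ℂ) • 1 + dotσ (-((s / 2) • u + (t / 2) • v)) := by
    rw [st_add_st]
    ext i j
    fin_cases i <;> fin_cases j <;> simp [dotσ_eq, one_apply] <;> ring
  rw [heq]
  refine posSemidef_smul_one_add_dotσ (by linarith) ?_
  simp only [Pi.neg_apply, Pi.add_apply, Pi.smul_apply, smul_eq_mul]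
  linarith

open scoped MatrixOrder in
lemma trace_mul_nonneg_of_posSemidef {n : Type*} [Fintype n] [DecidableEq n]
    {P Q : Matrix n n ℂ} (hP : P.PosSemidef) (hQ : Q.PosSemidef) : 0 ≤ (P * Q).trace := by
  set R := CFC.sqrt P
  have hR : Rᴴ = R := (nonneg_iff_posSemidef.mp (CFC.sqrt_nonneg P)).1.eq
  have hRR : R * R = P := CFC.sqrt_mul_sqrt_self P (nonneg_iff_posSemidef.mpr hP)
  have hcyc : (P * Q).trace = (Rᴴ * Q * R).trace := by
    rw [← hRR, hR, Matrix.mul_assoc, trace_mul_comm, Matrix.mul_assoc]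
  rw [hcyc]
  exact (hQ.conjTranspose_mul_mul_same R).trace_nonneg

lemma re_trace_mul_nonneg_of_posSemidef {n : Type*} [Fintype n] [DecidableEq n]
    {P Q : Matrix n n ℂ} (hP : P.PosSemidef) (hQ : Q.PosSemidef) : 0 ≤ (P * Q).trace.re :=
  (Complex.nonneg_iff.mp (trace_mul_nonneg_of_posSemidef hP hQ)).1

lemma ua_sq_sum : ua 0 ^ 2 + ua 1 ^ 2 + ua 2 ^ 2 = 1 := by
  simp [ua]; norm_num

lemma ub_sq_sum : ub 0 ^ 2 + ub 1 ^ 2 + ub 2 ^ 2 = 1 := by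
  simp [ub]; norm_num

lemma posSemidef_smul_one_sub_st_ua_add_st_ub (x y : Bool) :
    (((1 + 1 / √2 : ℝ) : ℂ) • 1 - (st ua (sgn x) + st ub (sgn y))).PosSemidef := by
  refine posSemidef_smul_one_sub_st_add_st (le_add_of_nonneg_right (by positivity)) ?_
  cases x <;> cases y <;> simp [ua, ub, sgn]

lemma Psucc_nonneg {C D : Bool → Matrix (Fin 2) (Fin 2) ℂ} (hC : IsPOVM C) (hD : IsPOVM D) :
    0 ≤ Psucc C D := by
  have hua : IsPOVM fun z => st ua (sgn z) := isPOVM_st ua_sq_sum.le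
  have hub : IsPOVM fun z => st ub (sgn z) := isPOVM_st ub_sq_sum.le
  unfold Psucc
  exact mul_nonneg (by norm_num) <| Finset.sum_nonneg fun z _ => add_nonneg
    (re_trace_mul_nonneg_of_posSemidef (hua.1 z) (hC.1 z))
    (re_trace_mul_nonneg_of_posSemidef (hub.1 z) (hD.1 z))

lemma Psucc_le_of_compatible {C D : Bool → Matrix (Fin 2) (Fin 2) ℂ} (h : Compatible C D) :
    Psucc C D ≤ (2 + √2) / 4 := by
  obtain ⟨J, ⟨hJ, hJ1⟩, hC, hD⟩ := h
  obtain rfl : C = _ := funext hC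
  obtain rfl : D = _ := funext hD
  have hbound (x y : Bool) : ((st ua (sgn x) + st ub (sgn y)) * J (x, y)).trace.re
      ≤ (1 + 1 / √2) * (J (x, y)).trace.re := by
    have := re_trace_mul_nonneg_of_posSemidef
      (posSemidef_smul_one_sub_st_ua_add_st_ub x y) (hJ (x, y))
    rw [Matrix.sub_mul, Matrix.smul_mul, Matrix.one_mul, trace_sub, trace_smul, sub_re,
      smul_eq_mul, re_ofReal_mul] at this
    linarith
  have htrace : ∑ p, (J p).trace.re = 2 := by
    rw [← re_sum, ← trace_sum, hJ1]
    simp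
  have hk : (1 + 1 / √2) * 2 = 2 + √2 := by
    field_simp
    linear_combination -Real.sq_sqrt (zero_le_two : (0 : ℝ) ≤ 2)
  simp only [Psucc, Fintype.sum_bool, Fintype.sum_prod_type, Matrix.mul_add, Matrix.add_mul,
    trace_add, add_re] at hbound htrace ⊢
  linarith [hbound true true, hbound true false, hbound false true, hbound false false,
    congrArg ((1 + 1 / √2) * ·) htrace]

lemma Psucc_mix (η : ℝ) (A B C D : Bool → Matrix (Fin 2) (Fin 2) ℂ) :
    Psucc (fun x => (η : ℂ) • A x + ((1 - η : ℝ) : ℂ) • C x)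
        (fun y => (η : ℂ) • B y + ((1 - η : ℝ) : ℂ) • D y) =
      η * Psucc A B + (1 - η) * Psucc C D := by
  simp only [Psucc, Fintype.sum_bool, Matrix.mul_add, Matrix.mul_smul, trace_add, trace_smul,
    smul_eq_mul, add_re, re_ofReal_mul]
  ring

lemma Psucc_st (a b : Fin 3 → ℝ) :
    Psucc (fun z => st a (sgn z)) (fun z => st b (sgn z)) =
      (2 + (a 0 + a 1 + b 0 - b 1) / √2) / 4 := by
  simp only [Psucc, Fintype.sum_bool, trace_st_mul_st, ofReal_re, sgn, ua, ub, if_true,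
    Bool.false_eq_true, if_false, cons_val_zero, cons_val_one, Matrix.cons_val]
  ring

lemma mul_le_of_compatible_mix {η a₀ a₁ : ℝ} (hη : η ≤ 1) {C D : Bool → Matrix (Fin 2) (Fin 2) ℂ}
    (hC : IsPOVM C) (hD : IsPOVM D)
    (h : Compatible (fun x => (η : ℂ) • st ![a₀, a₁, 0] (sgn x) + ((1 - η : ℝ) : ℂ) • C x)
      (fun y => (η : ℂ) • st ![a₀, -a₁, 0] (sgn y) + ((1 - η : ℝ) : ℂ) • D y)) :
    η * (√2 + (a₀ + a₁)) ≤ √2 + 1 := by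
  have hle := Psucc_le_of_compatible h
  rw [Psucc_mix, Psucc_st] at hle
  have := mul_nonneg (sub_nonneg.2 hη) (Psucc_nonneg hC hD)
  have h2 : √2 * √2 = 2 := Real.mul_self_sqrt zero_le_two
  simp only [Matrix.cons_val_zero, Matrix.cons_val_one] at hle
  calc η * (√2 + (a₀ + a₁)) = √2 / 2 * (η * (2 + (a₀ + a₁ + a₀ - -a₁) / √2)) := by
        field_simp
        ring
    _ ≤ √2 / 2 * (2 + √2) := by gcongr; linarith
    _ = √2 + 1 := by linear_combination h2 / 2

lemma compatible_st_of_add_eq_one {p q : ℝ} (hp : 0 ≤ p) (hq : 0 ≤ q) (hpq : p + q = 1) :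
    Compatible (fun x => st ![p, q, 0] (sgn x)) (fun y => st ![p, -q, 0] (sgn y)) := by
  obtain rfl : q = 1 - p := by linarith
  have he₁ : IsPOVM fun z => st ![1, 0, 0] (sgn z) := isPOVM_st (by simp)
  have he₂ : IsPOVM fun z => st ![0, 1, 0] (sgn z) := isPOVM_st (by simp)
  set J : Bool × Bool → Matrix (Fin 2) (Fin 2) ℂ := fun xy =>
    if xy.1 = xy.2 then (p : ℂ) • st ![1, 0, 0] (sgn xy.1)
    else ((1 - p : ℝ) : ℂ) • st ![0, 1, 0] (sgn xy.1)
  have hA (x : Bool) : st ![p, 1 - p, 0] (sgn x) = ∑ y, J (x, y) := by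
    have hvec : p • ![1, 0, 0] + (1 - p) • ![0, 1, 0] = ![p, 1 - p, (0 : ℝ)] := by
      ext i; fin_cases i <;> simp
    rw [← hvec, ← smul_st_add_smul_st, Fintype.sum_bool]
    cases x <;> simp [J, add_comm]
  have hB (y : Bool) : st ![p, -(1 - p), 0] (sgn y) = ∑ x, J (x, y) := by
    have hvec : p • ![1, 0, 0] + (1 - p) • -![0, 1, 0] = ![p, -(1 - p), (0 : ℝ)] := by
      ext i; fin_cases i <;> simp
    rw [← hvec, ← smul_st_add_smul_st, st_neg, Fintype.sum_bool]
    cases y <;> simp [J, sgn, add_comm]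
  refine ⟨J, ⟨fun ⟨x, y⟩ => ?_, ?_⟩, hA, hB⟩
  · dsimp only [J]
    split_ifs
    · exact (he₁.1 x).smul (by exact_mod_cast hp)
    · exact (he₂.1 x).smul (by exact_mod_cast hq)
  · rw [Fintype.sum_prod_type, ← Finset.sum_congr rfl fun x _ => hA x]
    exact (isPOVM_st (by simp; nlinarith)).2

lemma exists_compatible_mix {η a₀ a₁ : ℝ} (h₀ : (1 - η) / √2 ≤ η * a₀)
    (h₁ : (1 - η) / √2 ≤ η * a₁) (hsum : η * (a₀ + a₁) - (1 - η) * √2 = 1) :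
    ∃ C D, IsPOVM C ∧ IsPOVM D ∧
      Compatible (fun x => (η : ℂ) • st ![a₀, a₁, 0] (sgn x) + ((1 - η : ℝ) : ℂ) • C x)
        (fun y => (η : ℂ) • st ![a₀, -a₁, 0] (sgn y) + ((1 - η : ℝ) : ℂ) • D y) := by
  have hua : (-ua) 0 ^ 2 + (-ua) 1 ^ 2 + (-ua) 2 ^ 2 ≤ 1 := by simpa using ua_sq_sum.le
  have hub : (-ub) 0 ^ 2 + (-ub) 1 ^ 2 + (-ub) 2 ^ 2 ≤ 1 := by simpa using ub_sq_sum.le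
  refine ⟨_, _, isPOVM_st hua, isPOVM_st hub, ?_⟩
  simp only [smul_st_add_smul_st]
  have hA : η • ![a₀, a₁, 0] + (1 - η) • -ua
      = ![η * a₀ - (1 - η) / √2, η * a₁ - (1 - η) / √2, 0] := by
    ext i; fin_cases i <;> simp [ua] <;> ring
  have hB : η • ![a₀, -a₁, 0] + (1 - η) • -ub
      = ![η * a₀ - (1 - η) / √2, -(η * a₁ - (1 - η) / √2), 0] := by
    ext i; fin_cases i <;> simp [ub] <;> ring
  rw [hA, hB]
  refine compatible_st_of_add_eq_one (by linarith) (by linarith) ?_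
  linear_combination hsum - (1 - η) * Real.div_sqrt (x := 2)

theorem etaG_st_planar {a₀ a₁ : ℝ} (h₀ : 0 ≤ a₀) (h₁ : 0 ≤ a₁) (h₀' : a₀ ≤ 1) (h₁' : a₁ ≤ 1)
    (hsum : 1 ≤ a₀ + a₁) :
    etaG (fun z => st ![a₀, a₁, 0] (sgn z)) (fun z => st ![a₀, -a₁, 0] (sgn z)) =
      (√2 + 1) / (√2 + (a₀ + a₁)) := by
  have hd : 0 < √2 + (a₀ + a₁) := by positivity
  set η₀ := (√2 + 1) / (√2 + (a₀ + a₁))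
  have hη₀ : η₀ * (√2 + (a₀ + a₁)) = √2 + 1 := div_mul_cancel₀ _ hd.ne'
  have hη₀0 : 0 ≤ η₀ := by positivity
  have hη₀1 : η₀ ≤ 1 := (div_le_one hd).2 (by linarith)
  have hweight {t u : ℝ} (ht : 0 ≤ t) (hu : u ≤ 1) (htu : t + u = a₀ + a₁) :
      (1 - η₀) / √2 ≤ η₀ * t := by
    have h2 : √2 * √2 = 2 := Real.mul_self_sqrt zero_le_two
    have hη₀u : η₀ * u ≤ 1 := by nlinarith [mul_le_mul_of_nonneg_left hu hη₀0]
    rw [div_le_iff₀ (Real.sqrt_pos.2 two_pos)]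
    refine le_of_mul_le_mul_left ?_ (Real.sqrt_pos.2 two_pos)
    rw [← htu] at hη₀
    linarith [mul_nonneg hη₀0 ht, congrArg (η₀ * t * ·) h2]
  refine IsGreatest.csSup_eq ⟨⟨⟨hη₀0, hη₀1⟩, exists_compatible_mix (hweight h₀ h₁' rfl)
    (hweight h₁ h₀' (add_comm _ _)) (by linear_combination hη₀)⟩, ?_⟩
  rintro η ⟨⟨-, hη1⟩, C, D, hC, hD, h⟩
  rw [le_div_iff₀ hd]
  exact mul_le_of_compatible_mix hη1 hC hD h

/-- for `a = cosθ e₁ + sinθ e₂`, `b = cosθ e₁ − sinθ e₂` with `0 < θ < π/2`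
and `1/(cosθ+sinθ) < γ ≤ 1`, the generalized incompatibility robustness of the noisy
unbiased qubit measurements `A_{γa}(±) = (I ± γ a·σ)/2`, `B_{γb}(±) = (I ± γ b·σ)/2` equals
`(√2+1)/(√2 + γ(cosθ+sinθ))`. -/
theorem stmt_18 (θ γ : ℝ) (hθ0 : 0 < θ) (hθ1 : θ < Real.pi / 2)
    (hγ1 : γ ≤ 1) (hγ : 1 / (Real.cos θ + Real.sin θ) < γ) :
    etaG (fun z => st (γ • ![Real.cos θ, Real.sin θ, 0]) (sgn z))
        (fun z => st (γ • ![Real.cos θ, -Real.sin θ, 0]) (sgn z)) =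
      (Real.sqrt 2 + 1) / (Real.sqrt 2 + γ * (Real.cos θ + Real.sin θ)) := by
  have hc : 0 < Real.cos θ := Real.cos_pos_of_mem_Ioo ⟨by linarith, hθ1⟩
  have hs : 0 < Real.sin θ := Real.sin_pos_of_pos_of_lt_pi hθ0 (by linarith)
  have hγS : 1 < γ * (Real.cos θ + Real.sin θ) := by rwa [div_lt_iff₀ (by positivity)] at hγ
  have hγ0 : 0 < γ := by nlinarith
  simp only [Matrix.smul_cons, smul_eq_mul, mul_zero, mul_neg, Matrix.smul_empty]
  rw [mul_add] at hγS ⊢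
  exact etaG_st_planar (by positivity) (by positivity)
    (mul_le_one₀ hγ1 hc.le (Real.cos_le_one θ)) (mul_le_one₀ hγ1 hs.le (Real.sin_le_one θ)) hγS.le
end
end
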